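/- arXiv:1605.04518 — 2 statements merged into one kernel-verified Lean document; each statement's English description precedes it below -/
import Mathlib

section
/- Let V be a real topological vector space, let q : V → ℝ be a continuous weak Minkowski norm, let P := { p ∈ V' | ⟨p,x⟩ ≤ q(x) for all x ∈ V }, and let cl(ext P) denote the weak* closure of the set of extreme points of P. If f : V → ℝ is nonexpansive with respect to q, then for every x ∈ V, f(x) = min_{y ∈ V} max_{p ∈ cl(ext P)} ( ⟨p,x−y⟩ + f(y) ), i.e., the minimax representation of f remains valid when the maximum over P is restricted to points of cl(ext P). -/
/-!
The inner maximum is `q (x - y) + f y`, so the representation reduces to nonexpansiveness: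
`y = x` gives the value `f x`, and `f x ≤ q (x - y) + f y` for every `y`. To see that the maximum
of `p ↦ p z` over `cl(ext P)` is `q z`, note that `P` is weak* compact (a Banach–Alaoglu argument
for the continuous sublinear `q`) and that Hahn–Banach gives some `p ∈ P` with `p z = q z`. The
maximizers of `p ↦ p z` on `P` form a nonempty compact exposed face of `P`, which by the
Krein–Milman lemma has an extreme point, and this is an extreme point of `P` itself.
-/

open Set Topology

section Sublinear

variable {V : Type*} [AddCommGroup V] [Module ℝ V] {q : V → ℝ}

lemma map_zero_of_posHomogeneous (hq_hom : ∀ c : ℝ, 0 ≤ c → ∀ x : V, q (c • x) = c * q x) :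
    q 0 = 0 := by
  simpa using hq_hom 0 le_rfl 0

lemma ConvexOn.map_add_le_of_posHomogeneous (hq_convex : ConvexOn ℝ univ q)
    (hq_hom : ∀ c : ℝ, 0 ≤ c → ∀ x : V, q (c • x) = c * q x) (a b : V) :
    q (a + b) ≤ q a + q b := by
  have hmid := hq_convex.2 (mem_univ a) (mem_univ b) (by norm_num : (0 : ℝ) ≤ 1 / 2)
    (by norm_num : (0 : ℝ) ≤ 1 / 2) (by norm_num)
  have hhalf := hq_hom (1 / 2) (by norm_num) (a + b)
  rw [smul_add] at hhalf
  simp only [smul_eq_mul] at hmid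
  linarith

lemma LinearMap.exists_le_sublinear_apply_eq
    (hq_hom : ∀ c : ℝ, 0 ≤ c → ∀ x : V, q (c • x) = c * q x)
    (hq_add : ∀ a b : V, q (a + b) ≤ q a + q b) (z : V) :
    ∃ g : V →ₗ[ℝ] ℝ, (∀ v, g v ≤ q v) ∧ g z = q z := by
  have hq0 := map_zero_of_posHomogeneous hq_hom
  let g₀ : V →ₗ.[ℝ] ℝ := LinearPMap.mkSpanSingleton' z (q z) fun c hc => by
    rcases smul_eq_zero.1 hc with rfl | rfl
    · exact zero_smul _ _
    · rw [hq0, smul_zero]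
  have hg₀ : ∀ v : g₀.domain, g₀ v ≤ q v := by
    rintro ⟨v, hv⟩
    obtain ⟨c, rfl⟩ := Submodule.mem_span_singleton.1 hv
    rw [LinearPMap.mkSpanSingleton'_apply, RingHom.id_apply, smul_eq_mul]
    rcases le_or_gt 0 c with hc | hc
    · rw [hq_hom c hc]
    · have hneg : q (c • z) = -c * q (-z) := by
        rw [← hq_hom (-c) (by linarith), neg_smul_neg]
      have hsum := hq_add z (-z)
      rw [add_neg_cancel, hq0] at hsum
      rw [hneg]
      nlinarith
  obtain ⟨g, hg_ext, hg_le⟩ :=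
    exists_extension_of_le_sublinear g₀ q (fun c hc => hq_hom c hc.le) hq_add hg₀
  refine ⟨g, hg_le, ?_⟩
  rw [hg_ext ⟨z, show z ∈ g₀.domain from Submodule.mem_span_singleton_self z⟩]
  exact LinearPMap.mkSpanSingleton'_apply_self _ _ _ _

/-- Squeeze `g` between `-q (-v)` and `q v`, both of which tend to `0` at `0`. -/
lemma LinearMap.continuous_of_le [TopologicalSpace V] [IsTopologicalAddGroup V]
    (hq : ContinuousAt q 0) (hq0 : q 0 = 0) (g : V →ₗ[ℝ] ℝ) (hg : ∀ v, g v ≤ q v) :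
    Continuous g := by
  refine continuous_of_continuousAt_zero g ?_
  have hup : Filter.Tendsto q (𝓝 0) (𝓝 0) := hq0 ▸ hq
  have hlo : Filter.Tendsto (fun v : V => -q (-v)) (𝓝 0) (𝓝 0) := by
    simpa using (hup.comp (continuous_neg.tendsto' (0 : V) 0 neg_zero)).neg
  rw [ContinuousAt, map_zero]
  refine tendsto_of_tendsto_of_tendsto_of_le_of_le hlo hup (fun v => ?_) hg
  linarith [hg (-v), g.map_neg v]

end Sublinear

section IsCompact

variable {E : Type*} [AddCommGroup E] [Module ℝ E] [TopologicalSpace E] [T2Space E]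
  [IsTopologicalAddGroup E] [ContinuousSMul ℝ E] [LocallyConvexSpace ℝ E]

lemma IsCompact.exists_mem_extremePoints_isMaxOn {s : Set E} (hs : IsCompact s)
    (hne : s.Nonempty) (l : StrongDual ℝ E) : ∃ x ∈ s.extremePoints ℝ, IsMaxOn l s x := by
  have hexposed : IsExposed ℝ s {y ∈ s | ∀ z ∈ s, l z ≤ l y} := fun _ => ⟨l, rfl⟩
  obtain ⟨z, hz, hzmax⟩ := hs.exists_isMaxOn hne l.continuous.continuousOn
  obtain ⟨x, hx⟩ := (hexposed.isCompact hs).extremePoints_nonempty ⟨z, hz, fun y hy => hzmax hy⟩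
  exact ⟨x, hexposed.isExtreme.extremePoints_subset_extremePoints hx, fun y hy => hx.1.2 y hy⟩

end IsCompact

namespace WeakDual

variable {V : Type*} [AddCommGroup V] [Module ℝ V] [TopologicalSpace V]

instance : LocallyConvexSpace ℝ (WeakDual ℝ V) := WeakBilin.locallyConvexSpace

def dominatedBy (q : V → ℝ) : Set (WeakDual ℝ V) := {p | ∀ x, p x ≤ q x}

lemma isClosed_dominatedBy (q : V → ℝ) : IsClosed (dominatedBy q) := by
  simp only [dominatedBy, ofPred_forall]
  exact isClosed_iInter fun x => isClosed_le (eval_continuous x) continuous_const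

variable [IsTopologicalAddGroup V] {q : V → ℝ}

lemma isCompact_dominatedBy (hq : Continuous q) (hq0 : q 0 = 0) :
    IsCompact (dominatedBy q) := by
  have hemb : IsEmbedding ((↑) : WeakDual ℝ V → V → ℝ) :=
    DFunLike.coe_injective.isEmbedding_induced
  have himage : (↑) '' dominatedBy q =
      range ((↑) : (V →ₗ[ℝ] ℝ) → V → ℝ) ∩ {g | ∀ v, g v ≤ q v} := by
    ext g
    constructor
    · rintro ⟨p, hp, rfl⟩
      exact ⟨⟨p.toLinearMap, rfl⟩, hp⟩
    · rintro ⟨⟨g, rfl⟩, hg⟩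
      exact ⟨⟨g, g.continuous_of_le hq.continuousAt hq0 hg⟩, hg, rfl⟩
  rw [hemb.isCompact_iff, himage]
  refine (isCompact_univ_pi fun v => isCompact_Icc (a := -q (-v)) (b := q v)).of_isClosed_subset
    ((LinearMap.isClosed_range_coe _ _ _).inter ?_) ?_
  · simp only [ofPred_forall]
    exact isClosed_iInter fun v => isClosed_le (continuous_apply v) continuous_const
  · rintro _ ⟨⟨g, rfl⟩, hg⟩ v -
    exact ⟨by linarith [hg (-v), g.map_neg v], hg v⟩

lemma exists_mem_dominatedBy_apply_eq (hq_convex : ConvexOn ℝ univ q)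
    (hq_hom : ∀ c : ℝ, 0 ≤ c → ∀ x : V, q (c • x) = c * q x) (hq : Continuous q) (z : V) :
    ∃ p ∈ dominatedBy q, p z = q z := by
  obtain ⟨g, hg_le, hgz⟩ := LinearMap.exists_le_sublinear_apply_eq hq_hom
    (hq_convex.map_add_le_of_posHomogeneous hq_hom) z
  exact ⟨⟨g, g.continuous_of_le hq.continuousAt (map_zero_of_posHomogeneous hq_hom) hg_le⟩,
    hg_le, hgz⟩

lemma exists_mem_extremePoints_dominatedBy_apply_eq (hq_convex : ConvexOn ℝ univ q)
    (hq_hom : ∀ c : ℝ, 0 ≤ c → ∀ x : V, q (c • x) = c * q x) (hq : Continuous q) (z : V) :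
    ∃ p ∈ (dominatedBy q).extremePoints ℝ, p z = q z := by
  obtain ⟨p₁, hp₁, hp₁z⟩ := exists_mem_dominatedBy_apply_eq hq_convex hq_hom hq z
  let evalAt : StrongDual ℝ (WeakDual ℝ V) :=
    ⟨(topDualPairing ℝ V).flip z, eval_continuous z⟩
  obtain ⟨p, hp, hpmax⟩ := (isCompact_dominatedBy hq (map_zero_of_posHomogeneous hq_hom))
    |>.exists_mem_extremePoints_isMaxOn ⟨p₁, hp₁⟩ evalAt
  exact ⟨p, hp, le_antisymm (extremePoints_subset hp z) (hp₁z ▸ hpmax hp₁)⟩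

end WeakDual

open WeakDual in
theorem stmt4_general {V : Type*} [AddCommGroup V] [Module ℝ V] [TopologicalSpace V]
    [IsTopologicalAddGroup V]
    (q : V → ℝ) (hq_convex : ConvexOn ℝ Set.univ q)
    (hq_hom : ∀ (c : ℝ), 0 ≤ c → ∀ x : V, q (c • x) = c * q x)
    (hq_cont : Continuous q)
    (P : Set (WeakDual ℝ V)) (hP : P = {p : WeakDual ℝ V | ∀ x : V, p x ≤ q x})
    (f : V → ℝ) (hf : ∀ x y : V, f x - f y ≤ q (x - y)) :
    ∀ x : V,
      (∀ y : V, ∃ r : ℝ,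
        IsGreatest {s : ℝ | ∃ p ∈ closure (Set.extremePoints ℝ P), s = p (x - y) + f y} r) ∧
      IsLeast {r : ℝ | ∃ y : V,
        IsGreatest {s : ℝ | ∃ p ∈ closure (Set.extremePoints ℝ P), s = p (x - y) + f y} r}
        (f x) := by
  change P = dominatedBy q at hP
  subst hP
  have hclosure : closure ((dominatedBy q).extremePoints ℝ) ⊆ dominatedBy q :=
    closure_minimal extremePoints_subset (isClosed_dominatedBy q)
  have hmax : ∀ x y : V, IsGreatest
      {s : ℝ | ∃ p ∈ closure ((dominatedBy q).extremePoints ℝ), s = p (x - y) + f y}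
      (q (x - y) + f y) := by
    intro x y
    obtain ⟨p, hp, hpz⟩ :=
      exists_mem_extremePoints_dominatedBy_apply_eq hq_convex hq_hom hq_cont (x - y)
    refine ⟨⟨p, subset_closure hp, by rw [hpz]⟩, ?_⟩
    rintro _ ⟨p', hp', rfl⟩
    exact add_le_add_left (hclosure hp' (x - y)) _
  intro x
  refine ⟨fun y => ⟨_, hmax x y⟩,
    ⟨x, by simpa [map_zero_of_posHomogeneous hq_hom] using hmax x x⟩, ?_⟩
  rintro r ⟨y, hy⟩
  rw [hy.unique (hmax x y)]
  linarith [hf x y]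

/-- If `f : V → ℝ` is nonexpansive with respect to a continuous weak Minkowski
norm `q`, then for every `x`, `f x = min_{y} max_{p ∈ cl(ext P)} (p (x - y) + f y)`, where
`P` is the set of continuous linear forms dominated by `q` and `cl(ext P)` is the weak*
closure of its set of extreme points; the inner maximum is attained for each `y` and the
outer minimum over `y` is attained. -/
theorem stmt4 {V : Type*} [AddCommGroup V] [Module ℝ V] [TopologicalSpace V]
    [IsTopologicalAddGroup V] [ContinuousSMul ℝ V]
    (q : V → ℝ) (hq_convex : ConvexOn ℝ Set.univ q)
    (hq_hom : ∀ (c : ℝ), 0 ≤ c → ∀ x : V, q (c • x) = c * q x)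
    (hq_cont : Continuous q)
    (P : Set (WeakDual ℝ V)) (hP : P = {p : WeakDual ℝ V | ∀ x : V, p x ≤ q x})
    (f : V → ℝ) (hf : ∀ x y : V, f x - f y ≤ q (x - y)) :
    ∀ x : V,
      (∀ y : V, ∃ r : ℝ,
        IsGreatest {s : ℝ | ∃ p ∈ closure (Set.extremePoints ℝ P), s = p (x - y) + f y} r) ∧
      IsLeast {r : ℝ | ∃ y : V,
        IsGreatest {s : ℝ | ∃ p ∈ closure (Set.extremePoints ℝ P), s = p (x - y) + f y} r}
        (f x) :=
  stmt4_general q hq_convex hq_hom hq_cont P hP f hf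
end

section
/- Let V be a real topological vector space, let q : V → ℝ be a continuous weak Minkowski norm, and let f : V → ℝ be positively homogeneous and nonexpansive with respect to q. Fix y ∈ V and define g_y : V → ℝ by g_y(x) = inf_{λ > 0} ( λ f(y) + q(x − λy) ). Then g_y is convex, positively homogeneous, continuous, bounded below by f and above by q, and for every x ∈ V, g_y(x) = max_{p ∈ P_y} ⟨p,x⟩, where P_y := { p ∈ V' | ⟨p,z⟩ ≤ q(z) for all z ∈ V, and ⟨p,y⟩ ≤ f(y) }, the maximum being attained. -/
/-!
For `λ > 0`, nonexpansiveness and homogeneity of `f` give `f x ≤ λ f(y) + q(x - λy)`, so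
`g_y` is a genuine infimum. Subadditivity of `q` passes to `g_y` by adding the parameters `λ`,
and positive homogeneity by rescaling them, so `g_y` is sublinear, hence convex. Letting
`λ → 0⁺` gives `g_y ≤ q`, which makes `g_y` nonexpansive for `q` and therefore continuous. A linear `p ≤ q` with
`p y ≤ f y` lies below every term of the infimum, so `p x ≤ g_y x`; conversely Hahn–Banach
gives a linear `p ≤ g_y` with `p x = g_y x`, and `p ≤ g_y ≤ q` makes it continuous and puts it
in `P_y`.
-/

open Set Filter Topology Pointwise

section Sublinear

variable {E : Type*} [AddCommGroup E] [Module ℝ E]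

lemma ConvexOn.add_le_of_smul_eq {q : E → ℝ} (hconv : ConvexOn ℝ univ q)
    (hhom : ∀ c : ℝ, 0 < c → ∀ x, q (c • x) = c * q x) (u v : E) :
    q (u + v) ≤ q u + q v := by
  have hmid := hconv.2 (mem_univ u) (mem_univ v) (by norm_num : (0 : ℝ) ≤ 2⁻¹)
    (by norm_num : (0 : ℝ) ≤ 2⁻¹) (by norm_num)
  calc q (u + v) = 2 * q ((2 : ℝ)⁻¹ • u + (2 : ℝ)⁻¹ • v) := by
        rw [← smul_add, hhom _ (by norm_num)]; ring
    _ ≤ 2 * ((2 : ℝ)⁻¹ • q u + (2 : ℝ)⁻¹ • q v) := mul_le_mul_of_nonneg_left hmid zero_le_two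
    _ = q u + q v := by simp only [smul_eq_mul]; ring

lemma convexOn_univ_of_add_le_of_smul_eq {N : E → ℝ} (hadd : ∀ u v, N (u + v) ≤ N u + N v)
    (hhom : ∀ c : ℝ, 0 ≤ c → ∀ x, N (c • x) = c * N x) : ConvexOn ℝ univ N :=
  ⟨convex_univ, fun u _ v _ a b ha hb _ => by
    simpa only [hhom a ha, hhom b hb, smul_eq_mul] using hadd (a • u) (b • v)⟩

lemma exists_linearMap_le_and_eq_of_sublinear (N : E → ℝ)
    (hhom : ∀ c : ℝ, 0 < c → ∀ x, N (c • x) = c * N x) (hadd : ∀ u v, N (u + v) ≤ N u + N v)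
    (x : E) : ∃ p : E →ₗ[ℝ] ℝ, (∀ z, p z ≤ N z) ∧ p x = N x := by
  have hN0 : N 0 = 0 := by grind [hhom 2 (by norm_num) 0, smul_zero]
  have hspan : ∀ c : ℝ, c • x = 0 → c • N x = 0 := by
    intro c hc
    rcases smul_eq_zero.1 hc with rfl | rfl
    · exact zero_smul _ _
    · rw [hN0, smul_zero]
  set F := LinearPMap.mkSpanSingleton' (σ := RingHom.id ℝ) x (N x) hspan
  have hF : ∀ z : F.domain, F z ≤ N z := by
    rintro ⟨z, hz⟩
    obtain ⟨c, rfl⟩ := Submodule.mem_span_singleton.1 hz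
    rw [LinearPMap.mkSpanSingleton'_apply, RingHom.id_apply, smul_eq_mul]
    rcases lt_trichotomy c 0 with hc | rfl | hc
    · have hsum : 0 ≤ N (c • x) + N ((-c) • x) := by
        simpa [hN0] using hadd (c • x) ((-c) • x)
      rw [hhom (-c) (neg_pos.2 hc)] at hsum
      linarith
    · simp [hN0]
    · exact (hhom c hc x).ge
  obtain ⟨p, hpF, hpN⟩ := exists_extension_of_le_sublinear F N hhom hadd hF
  exact ⟨p, hpN, (hpF ⟨x, Submodule.mem_span_singleton_self x⟩).trans
    (LinearPMap.mkSpanSingleton'_apply_self (σ := RingHom.id ℝ) x (N x) hspan _)⟩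

end Sublinear

lemma continuous_of_sub_le {V : Type*} [AddCommGroup V] [TopologicalSpace V]
    [IsTopologicalAddGroup V] {q h : V → ℝ} (hq : Continuous q) (hq0 : q 0 = 0)
    (hsub : ∀ a b, h a - h b ≤ q (a - b)) : Continuous h := by
  refine continuous_iff_continuousAt.2 fun x₀ => ?_
  have hlow : Tendsto (fun x => h x₀ - q (x₀ - x)) (𝓝 x₀) (𝓝 (h x₀)) :=
    (continuous_const.sub (hq.comp (continuous_const.sub continuous_id))).tendsto' _ _
      (by simp [hq0])
  have hup : Tendsto (fun x => h x₀ + q (x - x₀)) (𝓝 x₀) (𝓝 (h x₀)) :=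
    (continuous_const.add (hq.comp (continuous_id.sub continuous_const))).tendsto' _ _
      (by simp [hq0])
  exact tendsto_of_tendsto_of_tendsto_of_le_of_le hlow hup
    (fun x => by linarith [hsub x₀ x]) (fun x => by linarith [hsub x x₀])

section RayInf

variable {V : Type*} [AddCommGroup V] [Module ℝ V]

def raySet (q : V → ℝ) (a : ℝ) (y x : V) : Set ℝ :=
  {r : ℝ | ∃ l : ℝ, 0 < l ∧ r = l * a + q (x - l • y)}

/-- `rayInf q (f y) y` is the paper's `g_y`. -/
noncomputable def rayInf (q : V → ℝ) (a : ℝ) (y x : V) : ℝ := sInf (raySet q a y x)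

variable {q : V → ℝ} {a : ℝ} {y : V}

lemma mem_raySet {x : V} {l : ℝ} (hl : 0 < l) : l * a + q (x - l • y) ∈ raySet q a y x :=
  ⟨l, hl, rfl⟩

lemma raySet_nonempty (x : V) : (raySet q a y x).Nonempty := ⟨_, mem_raySet one_pos⟩

lemma mem_lowerBounds_raySet {f : V → ℝ} (hf_hom : ∀ c : ℝ, 0 ≤ c → ∀ x, f (c • x) = c * f x)
    (hf_sub : ∀ u v, f u - f v ≤ q (u - v)) (hfy : f y ≤ a) (x : V) :
    f x ∈ lowerBounds (raySet q a y x) := by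
  rintro r ⟨l, hl, rfl⟩
  nlinarith [hf_sub x (l • y), hf_hom l hl.le y]

lemma le_rayInf {f : V → ℝ} (hf_hom : ∀ c : ℝ, 0 ≤ c → ∀ x, f (c • x) = c * f x)
    (hf_sub : ∀ u v, f u - f v ≤ q (u - v)) (hfy : f y ≤ a) (x : V) : f x ≤ rayInf q a y x :=
  le_csInf (raySet_nonempty x) (mem_lowerBounds_raySet hf_hom hf_sub hfy x)

lemma raySet_smul (hq_hom : ∀ c : ℝ, 0 < c → ∀ x, q (c • x) = c * q x) {c : ℝ} (hc : 0 < c)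
    (x : V) : raySet q a y (c • x) = c • raySet q a y x := by
  ext r
  simp only [raySet, mem_smul_set, mem_ofPred_eq, smul_eq_mul]
  constructor
  · rintro ⟨l, hl, rfl⟩
    refine ⟨l / c * a + q (x - (l / c) • y), ⟨l / c, div_pos hl hc, rfl⟩, ?_⟩
    rw [mul_add, ← hq_hom c hc, smul_sub, smul_smul, mul_div_cancel₀ _ hc.ne', ← mul_assoc,
      mul_div_cancel₀ _ hc.ne']
  · rintro ⟨_, ⟨l, hl, rfl⟩, rfl⟩
    refine ⟨c * l, mul_pos hc hl, ?_⟩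
    rw [mul_add, ← hq_hom c hc, smul_sub, smul_smul]
    ring

lemma rayInf_smul_of_pos (hq_hom : ∀ c : ℝ, 0 < c → ∀ x, q (c • x) = c * q x) (c : ℝ)
    (hc : 0 < c) (x : V) : rayInf q a y (c • x) = c * rayInf q a y x := by
  rw [rayInf, raySet_smul hq_hom hc, Real.sInf_smul_of_nonneg hc.le, smul_eq_mul, rayInf]

-- Homogeneity at `c = 2` forces this, as `Real.sInf_smul_of_nonneg` needs no boundedness.
lemma rayInf_zero (hq_hom : ∀ c : ℝ, 0 < c → ∀ x, q (c • x) = c * q x) :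
    rayInf q a y 0 = 0 := by
  have h := rayInf_smul_of_pos (a := a) (y := y) hq_hom 2 two_pos 0
  rw [smul_zero] at h
  linarith

lemma rayInf_smul (hq_hom : ∀ c : ℝ, 0 < c → ∀ x, q (c • x) = c * q x) (c : ℝ)
    (hc : 0 ≤ c) (x : V) : rayInf q a y (c • x) = c * rayInf q a y x := by
  rcases hc.lt_or_eq with hc | rfl
  · exact rayInf_smul_of_pos hq_hom c hc x
  · rw [zero_smul, zero_mul, rayInf_zero hq_hom]

lemma rayInf_le (hbdd : ∀ x, BddBelow (raySet q a y x)) {x : V} {l : ℝ} (hl : 0 < l) :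
    rayInf q a y x ≤ l * a + q (x - l • y) :=
  csInf_le (hbdd x) (mem_raySet hl)

lemma rayInf_self_le (hq0 : q 0 = 0) (hbdd : ∀ x, BddBelow (raySet q a y x)) :
    rayInf q a y y ≤ a := by
  simpa [hq0] using rayInf_le hbdd (x := y) one_pos

variable (hq_add : ∀ u v, q (u + v) ≤ q u + q v)
include hq_add

lemma rayInf_add_le (hbdd : ∀ x, BddBelow (raySet q a y x)) (u v : V) :
    rayInf q a y (u + v) ≤ rayInf q a y u + rayInf q a y v := by
  unfold rayInf
  rw [← csInf_add (raySet_nonempty u) (hbdd u) (raySet_nonempty v) (hbdd v)]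
  refine le_csInf ((raySet_nonempty u).add (raySet_nonempty v)) ?_
  rintro _ ⟨_, ⟨l₁, hl₁, rfl⟩, _, ⟨l₂, hl₂, rfl⟩, rfl⟩
  calc rayInf q a y (u + v) ≤ (l₁ + l₂) * a + q (u + v - (l₁ + l₂) • y) :=
        rayInf_le hbdd (add_pos hl₁ hl₂)
    _ ≤ (l₁ + l₂) * a + (q (u - l₁ • y) + q (v - l₂ • y)) := by
        have hsplit : u + v - (l₁ + l₂) • y = (u - l₁ • y) + (v - l₂ • y) := by
          rw [add_smul]; abel
        gcongr
        exact hsplit ▸ hq_add _ _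
    _ = _ := by ring

lemma rayInf_le_self (hq_hom : ∀ c : ℝ, 0 < c → ∀ x, q (c • x) = c * q x)
    (hbdd : ∀ x, BddBelow (raySet q a y x)) (x : V) : rayInf q a y x ≤ q x := by
  have hlim : Tendsto (fun l : ℝ => q x + l * (a + q (-y))) (𝓝[>] 0) (𝓝 (q x)) :=
    ((continuous_const.add (continuous_id.mul continuous_const)).tendsto' _ _
      (by simp)).mono_left nhdsWithin_le_nhds
  refine ge_of_tendsto hlim (eventually_nhdsWithin_of_forall fun l (hl : 0 < l) => ?_)
  calc rayInf q a y x ≤ l * a + q (x + l • -y) := by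
        simpa only [smul_neg, ← sub_eq_add_neg] using rayInf_le hbdd hl
    _ ≤ l * a + (q x + l * q (-y)) := by
        gcongr
        exact (hq_add _ _).trans_eq (by rw [hq_hom l hl])
    _ = q x + l * (a + q (-y)) := by ring

lemma rayInf_sub_le (hq_hom : ∀ c : ℝ, 0 < c → ∀ x, q (c • x) = c * q x)
    (hbdd : ∀ x, BddBelow (raySet q a y x)) (u v : V) :
    rayInf q a y u - rayInf q a y v ≤ q (u - v) := by
  have h := rayInf_add_le hq_add hbdd v (u - v)
  rw [add_sub_cancel] at h
  linarith [rayInf_le_self hq_add hq_hom hbdd (u - v)]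

end RayInf

theorem stmt12_general {V : Type*} [AddCommGroup V] [Module ℝ V] [TopologicalSpace V]
    [IsTopologicalAddGroup V]
    (q : V → ℝ) (hq_convex : ConvexOn ℝ Set.univ q)
    (hq_hom : ∀ (c : ℝ), 0 ≤ c → ∀ x : V, q (c • x) = c * q x)
    (hq_cont : Continuous q) (f : V → ℝ)
    (hf_hom : ∀ (c : ℝ), 0 ≤ c → ∀ x : V, f (c • x) = c * f x)
    (hf_ne : ∀ x y : V, f x - f y ≤ q (x - y)) (y : V)
    (g : V → ℝ)
    (hg : g = fun x : V => sInf {r : ℝ | ∃ l : ℝ, 0 < l ∧ r = l * f y + q (x - l • y)}) :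
    ConvexOn ℝ Set.univ g ∧
    (∀ (c : ℝ), 0 ≤ c → ∀ x : V, g (c • x) = c * g x) ∧
    Continuous g ∧
    (∀ x : V, f x ≤ g x) ∧
    (∀ x : V, g x ≤ q x) ∧
    (∀ x : V, IsGreatest {s : ℝ | ∃ p : V →L[ℝ] ℝ,
      ((∀ z : V, p z ≤ q z) ∧ p y ≤ f y) ∧ s = p x} (g x)) := by
  obtain rfl : g = rayInf q (f y) y := hg
  have hq_hom' : ∀ c : ℝ, 0 < c → ∀ x, q (c • x) = c * q x := fun c hc => hq_hom c hc.le
  have hq0 : q 0 = 0 := by simpa using hq_hom 0 le_rfl 0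
  have hq_add := hq_convex.add_le_of_smul_eq hq_hom'
  have hbdd : ∀ x, BddBelow (raySet q (f y) y x) :=
    fun x => ⟨f x, mem_lowerBounds_raySet hf_hom hf_ne le_rfl x⟩
  have hg_le_q := rayInf_le_self hq_add hq_hom' hbdd
  refine ⟨convexOn_univ_of_add_le_of_smul_eq (rayInf_add_le hq_add hbdd) (rayInf_smul hq_hom'),
    rayInf_smul hq_hom', continuous_of_sub_le hq_cont hq0 (rayInf_sub_le hq_add hq_hom' hbdd),
    le_rayInf hf_hom hf_ne le_rfl, hg_le_q, fun x => ⟨?_, ?_⟩⟩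
  · obtain ⟨p, hp_le, hpx⟩ := exists_linearMap_le_and_eq_of_sublinear (rayInf q (f y) y)
      (rayInf_smul_of_pos hq_hom') (rayInf_add_le hq_add hbdd) x
    have hpq : ∀ z, p z ≤ q z := fun z => (hp_le z).trans (hg_le_q z)
    have hp_cont : Continuous p :=
      continuous_of_sub_le hq_cont hq0 fun u v => map_sub p u v ▸ hpq (u - v)
    exact ⟨⟨p, hp_cont⟩, ⟨hpq, (hp_le y).trans (rayInf_self_le hq0 hbdd)⟩, hpx.symm⟩
  · rintro _ ⟨p, ⟨hpq, hpy⟩, rfl⟩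
    exact le_rayInf (fun c _ z => p.map_smul c z) (fun u v => map_sub p u v ▸ hpq (u - v)) hpy x

/-- Let `f : V → ℝ` be positively homogeneous and nonexpansive with respect to
a continuous weak Minkowski norm `q`. Fix `y ∈ V` and define
`g_y x = inf_{λ > 0} (λ f y + q (x - λ • y))`. Then `g_y` is convex, positively homogeneous,
continuous, bounded below by `f` and above by `q`, and for every `x`,
`g_y x = max_{p ∈ P_y} p x`, the maximum being attained, where
`P_y = {p ∈ V' | p ≤ q and p y ≤ f y}`. -/
theorem stmt12 {V : Type*} [AddCommGroup V] [Module ℝ V] [TopologicalSpace V]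
    [IsTopologicalAddGroup V] [ContinuousSMul ℝ V]
    (q : V → ℝ) (hq_convex : ConvexOn ℝ Set.univ q)
    (hq_hom : ∀ (c : ℝ), 0 ≤ c → ∀ x : V, q (c • x) = c * q x)
    (hq_cont : Continuous q) (f : V → ℝ)
    (hf_hom : ∀ (c : ℝ), 0 ≤ c → ∀ x : V, f (c • x) = c * f x)
    (hf_ne : ∀ x y : V, f x - f y ≤ q (x - y)) (y : V)
    (g : V → ℝ)
    (hg : g = fun x : V => sInf {r : ℝ | ∃ l : ℝ, 0 < l ∧ r = l * f y + q (x - l • y)}) :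
    ConvexOn ℝ Set.univ g ∧
    (∀ (c : ℝ), 0 ≤ c → ∀ x : V, g (c • x) = c * g x) ∧
    Continuous g ∧
    (∀ x : V, f x ≤ g x) ∧
    (∀ x : V, g x ≤ q x) ∧
    (∀ x : V, IsGreatest {s : ℝ | ∃ p : V →L[ℝ] ℝ,
      ((∀ z : V, p z ≤ q z) ∧ p y ≤ f y) ∧ s = p x} (g x)) :=
  stmt12_general q hq_convex hq_hom hq_cont f hf_hom hf_ne y g hg
end
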